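/- Let u, v ∈ F_2^n and suppose there exist positions x ∈ supp(v)\supp(u) and y ∈ supp(u)\supp(v). Set v̄ = v + e_x, ū = u + e_y. Define F_1 = [[I + v̄^T e_x, 0],[0, I + e_x^T v̄]], F_2 = [[I + ū^T e_y, 0],[0, I + e_y^T ū]], F_3 = [[I, e_x^T e_y + e_y^T e_x],[0, I]]. Then F_1 F_2 F_3 F_2 F_1 = [[I, v^T u + u^T v],[0, I]]. -/
import Mathlib


open Matrix

lemma vmv_mul {n : ℕ} (a b c d : Fin n → ZMod 2) :
    vecMulVec a b * vecMulVec c d = (b ⬝ᵥ c) • vecMulVec a d := by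
  ext i j
  simp [mul_apply, vecMulVec_apply, dotProduct, Finset.sum_mul, Finset.mul_sum]
  congr 1; ext k; ring

lemma vmv_add_left {n : ℕ} (a b c : Fin n → ZMod 2) :
    vecMulVec (a + b) c = vecMulVec a c + vecMulVec b c := by
  ext i j; simp [vecMulVec_apply]; ring

lemma vmv_add_right {n : ℕ} (a b c : Fin n → ZMod 2) :
    vecMulVec a (b + c) = vecMulVec a b + vecMulVec a c := by
  ext i j; simp [vecMulVec_apply]; ring

lemma mat_add_self {m : Type*} (M : Matrix m m (ZMod 2)) : M + M = 0 := by
  ext i j; exact CharTwo.add_self_eq_zero _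

lemma mat_two_nsmul {m : Type*} (M : Matrix m m (ZMod 2)) : (2:ℕ) • M = 0 := by
  rw [two_nsmul]; exact mat_add_self M

lemma mat_four_nsmul {m : Type*} (M : Matrix m m (ZMod 2)) : (4:ℕ) • M = 0 := by
  rw [show (4:ℕ) = 2*2 from rfl, mul_nsmul, mat_two_nsmul]

lemma mat_two_zsmul {m : Type*} (M : Matrix m m (ZMod 2)) : (2:ℤ) • M = 0 := by
  rw [two_zsmul]; exact mat_add_self M

lemma mat_four_zsmul {m : Type*} (M : Matrix m m (ZMod 2)) : (4:ℤ) • M = 0 := by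
  rw [show (4:ℤ) = 2*2 from rfl, mul_smul, mat_two_zsmul]


/-- Decomposition identity for the logical CZ gate (Appendix E): with
x ∈ supp(v)\supp(u), y ∈ supp(u)\supp(v), v̄ = v + e_x, ū = u + e_y,
F₁ F₂ F₃ F₂ F₁ = [[I, vᵀu + uᵀv],[0, I]]. -/
theorem cz_gate_decomposition {n : ℕ} (u v : Fin n → ZMod 2) (x y : Fin n)
    (hvx : v x = 1) (hux : u x = 0) (huy : u y = 1) (hvy : v y = 0) :
    let ex : Fin n → ZMod 2 := Pi.single x 1
    let ey : Fin n → ZMod 2 := Pi.single y 1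
    let vbar := v + ex
    let ubar := u + ey
    let F1 : Matrix (Fin n ⊕ Fin n) (Fin n ⊕ Fin n) (ZMod 2) :=
      Matrix.fromBlocks (1 + Matrix.vecMulVec vbar ex) 0 0
        (1 + Matrix.vecMulVec ex vbar)
    let F2 : Matrix (Fin n ⊕ Fin n) (Fin n ⊕ Fin n) (ZMod 2) :=
      Matrix.fromBlocks (1 + Matrix.vecMulVec ubar ey) 0 0
        (1 + Matrix.vecMulVec ey ubar)
    let F3 : Matrix (Fin n ⊕ Fin n) (Fin n ⊕ Fin n) (ZMod 2) :=
      Matrix.fromBlocks 1 (Matrix.vecMulVec ex ey + Matrix.vecMulVec ey ex) 0 1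
    F1 * F2 * F3 * F2 * F1 =
      Matrix.fromBlocks 1 (Matrix.vecMulVec v u + Matrix.vecMulVec u v) 0 1 := by
  intro ex ey vbar ubar F1 F2 F3
  have hxy : x ≠ y := by rintro rfl; rw [hux] at huy; exact zero_ne_one huy
  have h1 : ex ⬝ᵥ vbar = 0 := by simp [ex, vbar, hvx]; decide
  have h2 : ey ⬝ᵥ ubar = 0 := by simp [ey, ubar, huy]; decide
  have h3 : ex ⬝ᵥ ubar = 0 := by simp [ex, ey, ubar, hux, Pi.single_apply, hxy.symm]
  have h4 : ey ⬝ᵥ vbar = 0 := by simp [ex, ey, vbar, hvy, Pi.single_apply, hxy]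
  have h1' : vbar ⬝ᵥ ex = 0 := by rw [dotProduct_comm]; exact h1
  have h2' : ubar ⬝ᵥ ey = 0 := by rw [dotProduct_comm]; exact h2
  have h3' : ubar ⬝ᵥ ex = 0 := by rw [dotProduct_comm]; exact h3
  have h4' : vbar ⬝ᵥ ey = 0 := by rw [dotProduct_comm]; exact h4
  have h5 : ey ⬝ᵥ ex = 0 := by simp [ex, ey, Pi.single_apply, hxy]
  have h6 : ex ⬝ᵥ ey = 0 := by simp [ex, ey, Pi.single_apply, hxy.symm]
  have h7 : ex ⬝ᵥ ex = 1 := by simp [ex]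
  have h8 : ey ⬝ᵥ ey = 1 := by simp [ey]
  simp only [F1, F2, F3, fromBlocks_multiply]
  rw [Matrix.fromBlocks_inj]
  refine ⟨?_, ?_, ?_, ?_⟩ <;>
    simp only [mul_one, one_mul, mul_zero, zero_mul, add_zero, zero_add, mul_add, add_mul,
      vmv_mul, smul_smul, smul_add, h1, h2, h3, h4, h1', h2', h3', h4', h5, h6, h7, h8,
      zero_smul, one_smul, smul_zero, add_zero, zero_add]
  · abel_nf
    simp only [mat_two_nsmul, mat_two_zsmul, add_zero, zero_add]
  · simp only [vbar, ubar, vmv_add_left, vmv_add_right]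
    abel_nf
    simp only [mat_two_nsmul, mat_four_nsmul, mat_two_zsmul, mat_four_zsmul, add_zero, zero_add]
    try abel
  · abel_nf
    simp only [mat_two_nsmul, mat_two_zsmul, add_zero, zero_add]
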